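/- arXiv:1709.00737 — 3 statements merged into one kernel-verified Lean document; each statement's English description precedes it below -/
import Mathlib

section
/- Let X be a finite-dimensional Hilbert space, F ∈ C²([0,T] × X) with ∇ₓF(t,0) = 0 for all t, A(t) := ∇ₓ²F(t,0), and λ₁(t) the minimal eigenvalue of A(t). Assume λ₁(0) > 0 and ∫₀ᵀ λ₁(s) ds < 0, and let t* be the first zero of t ↦ ∫₀ᵗ λ₁(s) ds in (0,T). For ε > 0 let u_ε solve ε u̇_ε(t) = −∇ₓF(t, u_ε(t)) with u_ε(0) → 0 as ε → 0. Then for every t ∈ [0, t*), u_ε → 0 uniformly on [0,t] as ε → 0. -/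
open Set MeasureTheory Filter
open scoped RealInnerProductSpace Topology

private lemma grad_structure
    {X : Type*} [NormedAddCommGroup X] [InnerProductSpace ℝ X] [CompleteSpace X]
    (F : ℝ → X → ℝ) (hF : ContDiff ℝ 2 (fun p : ℝ × X => F p.1 p.2)) :
    ∃ D : ℝ × X → (X →L[ℝ] X),
      Continuous D ∧
      (∀ t x, HasFDerivAt (gradient (F t)) (D (t, x)) x) ∧
      (∀ t (v w : X), ⟪D (t, 0) v, w⟫ = ⟪D (t, 0) w, v⟫) := by
  classical
  set G : ℝ × X → ℝ := fun p => F p.1 p.2 with hG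
  have hGdiff : Differentiable ℝ G := hF.differentiable (by norm_num)
  have hG1 : ContDiff ℝ 1 (fderiv ℝ G) := hF.fderiv_right (by norm_num)
  have hHdiff : Differentiable ℝ (fderiv ℝ G) := hG1.differentiable (by norm_num)
  set H : ℝ × X → (ℝ × X) →L[ℝ] ((ℝ × X) →L[ℝ] ℝ) := fderiv ℝ (fderiv ℝ G) with hH
  have hHcont : Continuous H := hG1.continuous_fderiv (by norm_num)
  set T1 : ((ℝ × X) →L[ℝ] ℝ) →L[ℝ] (X →L[ℝ] ℝ) :=
    (ContinuousLinearMap.compL ℝ X (ℝ × X) ℝ).flip (ContinuousLinearMap.inr ℝ ℝ X) with hT1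
  set T2 : (X →L[ℝ] ℝ) →L[ℝ] X :=
    ((InnerProductSpace.toDual ℝ X).symm.toContinuousLinearEquiv :
      (X →L[ℝ] ℝ) ≃L[ℝ] X).toContinuousLinearMap with hT2
  refine ⟨fun p => (T2.comp T1).comp ((H p).comp (ContinuousLinearMap.inr ℝ ℝ X)), ?_, ?_, ?_⟩
  · exact continuous_const.clm_comp
      (Continuous.clm_comp (𝕜 := ℝ) (E := X) (F := ℝ × X) (G := (ℝ × X) →L[ℝ] ℝ) hHcont continuous_const)
  · intro t x
    have key : ∀ y : X, gradient (F t) y = T2 (T1 (fderiv ℝ G (t, y))) := by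
      intro y
      have hFt : HasFDerivAt (F t) ((fderiv ℝ G (t, y)).comp (ContinuousLinearMap.inr ℝ ℝ X)) y :=
        (hGdiff (t, y)).hasFDerivAt.comp y (hasFDerivAt_prodMk_right t y)
      rw [gradient, hFt.fderiv]
      rfl
    have h2 : HasFDerivAt (fun y : X => fderiv ℝ G (t, y))
        ((H (t, x)).comp (ContinuousLinearMap.inr ℝ ℝ X)) x :=
      HasFDerivAt.comp (𝕜 := ℝ) (E := X) (F := ℝ × X) (G := (ℝ × X) →L[ℝ] ℝ) x
        (hHdiff (t, x)).hasFDerivAt (hasFDerivAt_prodMk_right t x)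
    have h3 : HasFDerivAt (fun y : X => T2 (T1 (fderiv ℝ G (t, y))))
        ((T2.comp T1).comp ((H (t, x)).comp (ContinuousLinearMap.inr ℝ ℝ X))) x := by
      simpa [Function.comp_def] using HasFDerivAt.comp (𝕜 := ℝ) (E := X) (F := (ℝ × X) →L[ℝ] ℝ) (G := X) x
        (T2.comp T1).hasFDerivAt h2
    have : gradient (F t) = fun y : X => T2 (T1 (fderiv ℝ G (t, y))) := funext key
    rw [this]
    exact h3
  · intro t v w
    have hsymm : ∀ a b : ℝ × X, H (t, 0) a b = H (t, 0) b a := by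
      intro a b
      exact second_derivative_symmetric (fun y => (hGdiff y).hasFDerivAt)
        ((hHdiff (t, 0)).hasFDerivAt) a b
    have happ : ∀ z y : X,
        ⟪((T2.comp T1).comp ((H (t, 0)).comp (ContinuousLinearMap.inr ℝ ℝ X))) z, y⟫
          = H (t, 0) (0, z) (0, y) := by
      intro z y
      simp only [ContinuousLinearMap.comp_apply, ContinuousLinearMap.inr_apply]
      rw [hT2]
      simp only [ContinuousLinearEquiv.coe_coe, LinearIsometryEquiv.coe_toContinuousLinearEquiv]
      rw [InnerProductSpace.toDual_symm_apply]
      rfl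
    rw [happ, happ, hsymm]

private lemma rayleigh_key
    {X : Type*} [NormedAddCommGroup X] [InnerProductSpace ℝ X] [FiniteDimensional ℝ X]
    (A : X →L[ℝ] X) (hA : ∀ v w : X, ⟪A v, w⟫ = ⟪A w, v⟫) (lam : ℝ)
    (h : IsLeast {μ : ℝ | ∃ v : X, v ≠ 0 ∧ A v = μ • v} lam) :
    (∀ x : X, lam * ‖x‖ ^ 2 ≤ ⟪A x, x⟫) ∧ (∃ x : X, ‖x‖ = 1 ∧ ⟪A x, x⟫ = lam) := by
  classical
  have hsa : IsSelfAdjoint A := by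
    rw [ContinuousLinearMap.isSelfAdjoint_iff_isSymmetric]
    intro x y
    show ⟪A x, y⟫ = ⟪x, A y⟫
    rw [hA x y, real_inner_comm]
  obtain ⟨v, hv0, hvA⟩ := h.1
  have hvn : (0:ℝ) < ‖v‖ := norm_pos_iff.mpr hv0
  set z : X := ‖v‖⁻¹ • v with hz
  have hz1 : ‖z‖ = 1 := by
    rw [hz, norm_smul, norm_inv, norm_norm, inv_mul_cancel₀ (ne_of_gt hvn)]
  have hAz : ⟪A z, z⟫ = lam := by
    rw [hz]
    rw [A.map_smul, real_inner_smul_left, real_inner_smul_right, hvA, real_inner_smul_left,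
      real_inner_self_eq_norm_sq]
    field_simp
  -- minimize the Rayleigh quotient on the unit sphere
  have hsph : IsCompact (Metric.sphere (0:X) 1) := isCompact_sphere 0 1
  have hne : (Metric.sphere (0:X) 1).Nonempty := ⟨z, by simp [hz1]⟩
  obtain ⟨x₀, hx₀s, hx₀min⟩ :=
    hsph.exists_isMinOn hne A.reApplyInnerSelf_continuous.continuousOn
  have hx₀1 : ‖x₀‖ = 1 := by simpa using hx₀s
  have hx₀0 : x₀ ≠ 0 := by
    intro hc; rw [hc] at hx₀1; simp at hx₀1
  have hextr : IsMinOn A.reApplyInnerSelf (Metric.sphere (0:X) ‖x₀‖) x₀ := by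
    rw [hx₀1]; exact hx₀min
  have heig := hsa.hasEigenvector_of_isMinOn hx₀0 hextr
  set c : ℝ := ⨅ x : { x : X // x ≠ 0 }, A.rayleighQuotient x with hc
  have hAx₀ : A x₀ = c • x₀ := by
    have := heig.1
    rwa [Module.End.mem_eigenspace_iff] at this
  have hcS : c ∈ {μ : ℝ | ∃ v : X, v ≠ 0 ∧ A v = μ • v} := ⟨x₀, hx₀0, hAx₀⟩
  have hlamc : lam ≤ c := h.2 hcS
  have hreA : ∀ y : X, A.reApplyInnerSelf y = ⟪A y, y⟫ := fun y => rfl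
  have hreApp : A.reApplyInnerSelf x₀ = c := by
    rw [hreA, hAx₀, real_inner_smul_left, real_inner_self_eq_norm_sq, hx₀1]
    ring
  constructor
  · intro x
    rcases eq_or_ne x 0 with hx | hx
    · simp [hx]
    · have hxn : (0:ℝ) < ‖x‖ := norm_pos_iff.mpr hx
      set y : X := ‖x‖⁻¹ • x with hy
      have hy1 : y ∈ Metric.sphere (0:X) 1 := by
        simp [hy, norm_smul, norm_inv, inv_mul_cancel₀ (ne_of_gt hxn)]
      have hmin := hx₀min hy1
      have hAy : A.reApplyInnerSelf y = ‖x‖⁻¹ ^ 2 * ⟪A x, x⟫ := by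
        rw [hreA, hy, A.map_smul, real_inner_smul_left, real_inner_smul_right]
        ring
      have : c ≤ ‖x‖⁻¹ ^ 2 * ⟪A x, x⟫ := by
        rw [← hAy, ← hreApp]; exact hmin
      have h2 : c * ‖x‖ ^ 2 ≤ ⟪A x, x⟫ := by
        have hpos : (0:ℝ) < ‖x‖ ^ 2 := by positivity
        calc c * ‖x‖ ^ 2 ≤ (‖x‖⁻¹ ^ 2 * ⟪A x, x⟫) * ‖x‖ ^ 2 := by nlinarith
          _ = ⟪A x, x⟫ := by field_simp
      nlinarith [h2, sq_nonneg ‖x‖]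
  · exact ⟨z, hz1, hAz⟩

private lemma remainder_est
    {X : Type*} [NormedAddCommGroup X] [InnerProductSpace ℝ X] [FiniteDimensional ℝ X]
    (T : ℝ) (F : ℝ → X → ℝ) (D : ℝ × X → X →L[ℝ] X) (hDcont : Continuous D)
    (hDfd : ∀ t x, HasFDerivAt (gradient (F t)) (D (t, x)) x)
    (hcrit : ∀ t ∈ Icc 0 T, gradient (F t) 0 = 0)
    {δ : ℝ} (hδ : 0 < δ) :
    ∃ r > (0:ℝ), ∀ t ∈ Icc 0 T, ∀ x : X, ‖x‖ ≤ r →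
      ‖gradient (F t) x - D (t, 0) x‖ ≤ δ * ‖x‖ := by
  classical
  have hK : IsCompact ((Icc (0:ℝ) T) ×ˢ Metric.closedBall (0:X) 1) :=
    isCompact_Icc.prod (isCompact_closedBall 0 1)
  have hUC := hK.uniformContinuousOn_of_continuous hDcont.continuousOn
  obtain ⟨d, hd0, hd⟩ := (Metric.uniformContinuousOn_iff.mp hUC) δ hδ
  refine ⟨min (d/2) 1, by positivity, ?_⟩
  intro t ht x hx
  set s : Set X := Metric.closedBall (0:X) (min (d/2) 1) with hs
  have hbound : ∀ y ∈ s, ‖D (t, y) - D (t, 0)‖ ≤ δ := by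
    intro y hy
    have hy' : ‖y‖ ≤ min (d/2) 1 := by simpa [hs, Metric.mem_closedBall, dist_zero_right] using hy
    have hmem1 : (t, y) ∈ (Icc (0:ℝ) T) ×ˢ Metric.closedBall (0:X) 1 :=
      ⟨ht, by simpa [Metric.mem_closedBall, dist_zero_right] using hy'.trans (min_le_right _ _)⟩
    have hmem2 : (t, (0:X)) ∈ (Icc (0:ℝ) T) ×ˢ Metric.closedBall (0:X) 1 :=
      ⟨ht, by simp⟩
    have hdist : dist (t, y) (t, (0:X)) < d := by
      rw [Prod.dist_eq]
      simp only [dist_self, dist_zero_right]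
      have : ‖y‖ ≤ d/2 := hy'.trans (min_le_left _ _)
      have : max (0:ℝ) ‖y‖ ≤ d/2 := by simp [this]
      linarith
    have := hd _ hmem1 _ hmem2 hdist
    rw [dist_eq_norm] at this
    exact this.le
  have h0s : (0:X) ∈ s := by simp [hs]; positivity
  have hxs : x ∈ s := by simpa [hs, Metric.mem_closedBall, dist_zero_right] using hx
  have key := Convex.norm_image_sub_le_of_norm_hasFDerivWithin_le'
    (fun y (hy : y ∈ s) => (hDfd t y).hasFDerivWithinAt)
    hbound (convex_closedBall _ _) h0s hxs
  rw [hcrit t ht, sub_zero, sub_zero] at key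
  exact key

private lemma lam_cont
    {X : Type*} [NormedAddCommGroup X] [InnerProductSpace ℝ X]
    (T : ℝ) (A : ℝ → X →L[ℝ] X) (hA : Continuous A) (lam1 : ℝ → ℝ)
    (hray : ∀ s ∈ Icc (0:ℝ) T, (∀ x : X, lam1 s * ‖x‖ ^ 2 ≤ ⟪A s x, x⟫) ∧
      ∃ x : X, ‖x‖ = 1 ∧ ⟪A s x, x⟫ = lam1 s) :
    ContinuousOn lam1 (Icc 0 T) := by
  have key : ∀ s ∈ Icc (0:ℝ) T, ∀ t ∈ Icc (0:ℝ) T, lam1 s - lam1 t ≤ ‖A s - A t‖ := by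
    intro s hs t ht
    obtain ⟨x, hx1, hxe⟩ := (hray t ht).2
    have h1 : lam1 s ≤ ⟪A s x, x⟫ := by
      have := (hray s hs).1 x
      rwa [hx1, one_pow, mul_one] at this
    have h2 : ⟪A s x - A t x, x⟫ ≤ ‖A s - A t‖ := by
      calc ⟪A s x - A t x, x⟫ ≤ ‖A s x - A t x‖ * ‖x‖ := real_inner_le_norm _ _
        _ = ‖(A s - A t) x‖ := by rw [hx1, mul_one, ContinuousLinearMap.sub_apply]
        _ ≤ ‖A s - A t‖ * ‖x‖ := (A s - A t).le_opNorm x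
        _ = ‖A s - A t‖ := by rw [hx1, mul_one]
    have h3 : ⟪A s x, x⟫ = ⟪A t x, x⟫ + ⟪A s x - A t x, x⟫ := by
      rw [← inner_add_left]
      congr 1
      abel
    rw [h3, hxe] at h1
    linarith
  rw [Metric.continuousOn_iff]
  intro a ha ε hε
  obtain ⟨d, hd0, hd⟩ := Metric.continuous_iff.mp hA a ε hε
  refine ⟨d, hd0, fun b hb hdist => ?_⟩
  have h1 := key a ha b hb
  have h2 := key b hb a ha
  have h3 : ‖A b - A a‖ < ε := by
    have := hd b hdist
    rwa [dist_eq_norm] at this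
  have h4 : ‖A a - A b‖ < ε := by rwa [norm_sub_rev] at h3
  rw [Real.dist_eq, abs_lt]
  constructor <;> linarith

/-- delayed loss of stability (Proposition 3.1): solutions of the
singularly perturbed gradient flow with vanishing initial data converge to `0`
uniformly on `[0,t]` for every `t < t*`. -/
theorem stmt3
    {X : Type*} [NormedAddCommGroup X] [InnerProductSpace ℝ X] [FiniteDimensional ℝ X]
    (T : ℝ) (hT : 0 < T)
    (F : ℝ → X → ℝ) (hF : ContDiff ℝ 2 (fun p : ℝ × X => F p.1 p.2))
    (hcrit : ∀ t ∈ Icc 0 T, gradient (F t) 0 = 0)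
    (lam1 : ℝ → ℝ)
    (hlam : ∀ t ∈ Icc 0 T,
      IsLeast {μ : ℝ | ∃ v : X, v ≠ 0 ∧ fderiv ℝ (gradient (F t)) 0 v = μ • v} (lam1 t))
    (h0 : 0 < lam1 0)
    (hneg : (∫ s in (0:ℝ)..T, lam1 s) < 0)
    (tstar : ℝ)
    (htstar : IsLeast {t : ℝ | t ∈ Ioo 0 T ∧ (∫ s in (0:ℝ)..t, lam1 s) = 0} tstar)
    (u : ℝ → ℝ → X)
    (hu : ∀ ε > (0:ℝ), ∀ t ∈ Icc 0 T,
      HasDerivAt (u ε) (-(ε⁻¹) • gradient (F t) (u ε t)) t)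
    (hinit : Tendsto (fun ε => u ε 0) (𝓝[>] 0) (𝓝 0)) :
    ∀ t ∈ Ico 0 tstar,
      TendstoUniformlyOn (fun ε s => u ε s) 0 (𝓝[>] 0) (Icc 0 t) := by
  classical
  intro t ht
  obtain ⟨⟨hts_mem, hts_int⟩, hts_least⟩ := htstar
  have ht0 : (0:ℝ) ≤ t := ht.1
  have htts : t < tstar := ht.2
  have hts0 : (0:ℝ) < tstar := hts_mem.1
  have htsT : tstar < T := hts_mem.2
  have htT : t < T := htts.trans htsT
  obtain ⟨D, hDcont, hDfd, hDsymm⟩ := grad_structure F hF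
  set A : ℝ → X →L[ℝ] X := fun s => D (s, 0) with hAdef
  have hAfderiv : ∀ s, fderiv ℝ (gradient (F s)) 0 = A s := fun s => (hDfd s 0).fderiv
  have hAcont : Continuous A := hDcont.comp (continuous_id.prodMk continuous_const)
  have hray : ∀ s ∈ Icc (0:ℝ) T, (∀ x : X, lam1 s * ‖x‖ ^ 2 ≤ ⟪A s x, x⟫) ∧
      ∃ x : X, ‖x‖ = 1 ∧ ⟪A s x, x⟫ = lam1 s := by
    intro s hs
    have hL := hlam s hs
    simp only [hAfderiv s] at hL
    exact rayleigh_key (A s) (fun v w => hDsymm s v w) (lam1 s) hL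
  have hlamC : ContinuousOn lam1 (Icc 0 T) := lam_cont T A hAcont lam1 hray
  -- continuous extension of `lam1` to all of `ℝ`
  set lam' : ℝ → ℝ := fun s => lam1 (max 0 (min s T)) with hlam'def
  have hprojmem : ∀ s : ℝ, max 0 (min s T) ∈ Icc (0:ℝ) T :=
    fun s => ⟨le_max_left _ _, max_le hT.le (min_le_right _ _)⟩
  have hlam'eq : ∀ s ∈ Icc (0:ℝ) T, lam' s = lam1 s := by
    intro s hs
    simp only [hlam'def, min_eq_left hs.2, max_eq_right hs.1]
  have hlam'C : Continuous lam' :=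
    hlamC.comp_continuous (continuous_const.max (continuous_id.min continuous_const)) hprojmem
  set g : ℝ → ℝ := fun s => ∫ τ in (0:ℝ)..s, lam' τ with hgdef
  have hg' : ∀ s, HasDerivAt g (lam' s) s :=
    fun s => (hlam'C.integral_hasStrictDerivAt 0 s).hasDerivAt
  have hgC : Continuous g := continuous_iff_continuousAt.mpr fun s => (hg' s).continuousAt
  have hgg : ∀ s ∈ Icc (0:ℝ) T, g s = ∫ τ in (0:ℝ)..s, lam1 τ := by
    intro s hs
    apply intervalIntegral.integral_congr
    intro τ hτ
    rw [uIcc_of_le hs.1] at hτ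
    exact hlam'eq τ ⟨hτ.1, hτ.2.trans hs.2⟩
  have hg0 : g 0 = 0 := intervalIntegral.integral_same
  have hlam'0 : lam' 0 = lam1 0 := hlam'eq 0 ⟨le_rfl, hT.le⟩
  -- lower bound for `lam'` near `0`
  obtain ⟨η, hη0, hηlow⟩ : ∃ η > (0:ℝ), ∀ s ∈ Icc (0:ℝ) η, lam1 0 / 2 ≤ lam' s := by
    have hhalf : lam1 0 / 2 < lam' 0 := by rw [hlam'0]; linarith
    have hev : ∀ᶠ s in 𝓝 (0:ℝ), lam1 0 / 2 < lam' s :=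
      (hlam'C.tendsto 0).eventually (eventually_gt_nhds hhalf)
    obtain ⟨d, hd0, hd⟩ := Metric.eventually_nhds_iff.mp hev
    refine ⟨d/2, by positivity, fun s hs => ?_⟩
    have : dist s 0 < d := by
      rw [Real.dist_eq, sub_zero, abs_of_nonneg hs.1]; linarith [hs.2]
    exact (hd this).le
  have hglow : ∀ s ∈ Icc (0:ℝ) η, lam1 0 / 2 * s ≤ g s := by
    intro s hs
    have hint := intervalIntegral.integral_mono_on (μ := MeasureTheory.volume) hs.1
      (intervalIntegrable_const)
      (hlam'C.intervalIntegrable 0 s)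
      (fun τ hτ => hηlow τ ⟨hτ.1, hτ.2.trans hs.2⟩)
    simp only [intervalIntegral.integral_const, smul_eq_mul, sub_zero] at hint
    calc lam1 0 / 2 * s = s * (lam1 0 / 2) := by ring
      _ ≤ g s := hint
  have hgpos : ∀ s : ℝ, 0 < s → s ≤ t → 0 < g s := by
    intro s hs0 hst
    rcases le_or_gt s η with hsη | hsη
    · have := hglow s ⟨hs0.le, hsη⟩; nlinarith
    · by_contra hcon
      push_neg at hcon
      have hgη : 0 < g η := by have := hglow η ⟨hη0.le, le_rfl⟩; nlinarith
      have hzero_mem : (0:ℝ) ∈ Icc (g s) (g η) := ⟨hcon, hgη.le⟩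
      obtain ⟨ζ, hζmem, hζ⟩ := intermediate_value_Icc' hsη.le hgC.continuousOn hzero_mem
      have hζIoo : ζ ∈ Ioo (0:ℝ) T :=
        ⟨lt_of_lt_of_le hη0 hζmem.1, lt_of_le_of_lt (hζmem.2.trans hst) (htts.trans htsT)⟩
      have hζint : (∫ τ in (0:ℝ)..ζ, lam1 τ) = 0 := by
        rw [← hgg ζ ⟨hζIoo.1.le, hζIoo.2.le⟩]; exact hζ
      have := hts_least ⟨hζIoo, hζint⟩
      have hζs : ζ ≤ s := hζmem.2
      linarith
  -- choice of `δ0`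
  obtain ⟨δ0, hδ0pos, hδ0⟩ : ∃ δ0 > (0:ℝ), ∀ s ∈ Icc (0:ℝ) t, δ0 * s ≤ g s := by
    rcases le_or_gt t η with htη | htη
    · exact ⟨lam1 0 / 2, by linarith, fun s hs => hglow s ⟨hs.1, hs.2.trans htη⟩⟩
    · obtain ⟨ζm, hζm_mem, hζm_min⟩ := (isCompact_Icc (a := η) (b := t)).exists_isMinOn
        ⟨η, left_mem_Icc.mpr htη.le⟩ hgC.continuousOn
      have hm : 0 < g ζm := hgpos ζm (lt_of_lt_of_le hη0 hζm_mem.1) hζm_mem.2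
      refine ⟨min (lam1 0 / 2) (g ζm / T), lt_min (by linarith) (div_pos hm hT), fun s hs => ?_⟩
      rcases le_or_gt s η with hsη | hsη
      · calc min (lam1 0 / 2) (g ζm / T) * s ≤ lam1 0 / 2 * s :=
              mul_le_mul_of_nonneg_right (min_le_left _ _) hs.1
          _ ≤ g s := hglow s ⟨hs.1, hsη⟩
      · have h1 : min (lam1 0 / 2) (g ζm / T) * s ≤ (g ζm / T) * s :=
          mul_le_mul_of_nonneg_right (min_le_right _ _) hs.1
        have hsT : s ≤ T := hs.2.trans htT.le
        have h2 : (g ζm / T) * s ≤ g ζm := by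
          rw [div_mul_eq_mul_div, div_le_iff₀ hT]
          nlinarith
        have h3 : g ζm ≤ g s := hζm_min ⟨hsη.le, hs.2⟩
        linarith
  -- remainder estimate
  obtain ⟨r, hr0, hrem⟩ := remainder_est T F D hDcont hDfd hcrit hδ0pos
  have hIccT : Icc (0:ℝ) t ⊆ Icc (0:ℝ) T := Icc_subset_Icc le_rfl htT.le
  -- the key pointwise estimate for a fixed ε
  have key : ∀ ε > (0:ℝ), ‖u ε 0‖ < r → ∀ s ∈ Icc (0:ℝ) t, ‖u ε s‖ ≤ ‖u ε 0‖ := by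
    intro ε hε hsmall
    set f : ℝ → ℝ := fun s => ⟪u ε s, u ε s⟫ with hfdef
    set E : ℝ → ℝ := fun s => (2/ε) * (g s - δ0 * s) with hEdef
    set ψ : ℝ → ℝ := fun s => f s * Real.exp (E s) with hψdef
    have hucont : ∀ τ ∈ Icc (0:ℝ) T, ContinuousAt (u ε) τ :=
      fun τ hτ => (hu ε hε τ hτ).continuousAt
    have hEcont : Continuous E :=
      continuous_const.mul (hgC.sub (continuous_const.mul continuous_id))
    have hψcont : ∀ τ ∈ Icc (0:ℝ) T, ContinuousAt ψ τ := by
      intro τ hτ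
      have hpair : ContinuousAt (fun τ => (u ε τ, u ε τ)) τ :=
        (hucont τ hτ).prodMk (hucont τ hτ)
      exact ((continuous_inner.continuousAt).comp hpair).mul
        ((Real.continuous_exp.comp hEcont).continuousAt)
    have hψderiv : ∀ s ∈ Icc (0:ℝ) T, HasDerivAt ψ
        ((⟪u ε s, -(ε⁻¹) • gradient (F s) (u ε s)⟫ + ⟪-(ε⁻¹) • gradient (F s) (u ε s), u ε s⟫
          + f s * ((2/ε) * (lam' s - δ0))) * Real.exp (E s)) s := by
      intro s hs
      have hus := hu ε hε s hs
      have hf : HasDerivAt f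
          (⟪u ε s, -(ε⁻¹) • gradient (F s) (u ε s)⟫
            + ⟪-(ε⁻¹) • gradient (F s) (u ε s), u ε s⟫) s := hus.inner ℝ hus
      have hE' : HasDerivAt E ((2/ε) * (lam' s - δ0)) s := by
        have h1 : HasDerivAt (fun τ : ℝ => δ0 * τ) δ0 s := by
          simpa using (hasDerivAt_id s).const_mul δ0
        exact ((hg' s).sub h1).const_mul (2/ε)
      have hexp : HasDerivAt (fun τ => Real.exp (E τ))
          (Real.exp (E s) * ((2/ε) * (lam' s - δ0))) s := hE'.exp
      have : HasDerivAt ψ ((⟪u ε s, -(ε⁻¹) • gradient (F s) (u ε s)⟫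
          + ⟪-(ε⁻¹) • gradient (F s) (u ε s), u ε s⟫) * Real.exp (E s)
          + f s * (Real.exp (E s) * ((2/ε) * (lam' s - δ0)))) s := hf.fun_mul hexp
      convert this using 1
      ring
    have hd_nonpos : ∀ s ∈ Icc (0:ℝ) t, ‖u ε s‖ ≤ r →
        (⟪u ε s, -(ε⁻¹) • gradient (F s) (u ε s)⟫ + ⟪-(ε⁻¹) • gradient (F s) (u ε s), u ε s⟫
          + f s * ((2/ε) * (lam' s - δ0))) * Real.exp (E s) ≤ 0 := by
      intro s hs hur
      have hsT := hIccT hs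
      set w := u ε s with hw
      set Gr := gradient (F s) (u ε s) with hGr
      have hinner : (lam1 s - δ0) * ‖w‖ ^ 2 ≤ ⟪Gr, w⟫ := by
        have h1 : lam1 s * ‖w‖ ^ 2 ≤ ⟪A s w, w⟫ := (hray s hsT).1 w
        have h2 : ‖Gr - A s w‖ ≤ δ0 * ‖w‖ := hrem s hsT w hur
        have h5 : |⟪Gr - A s w, w⟫| ≤ δ0 * ‖w‖ ^ 2 := by
          have h6 := abs_real_inner_le_norm (Gr - A s w) w
          nlinarith [norm_nonneg w, norm_nonneg (Gr - A s w)]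
        have h3 : -(δ0 * ‖w‖ ^ 2) ≤ ⟪Gr - A s w, w⟫ := by
          have := neg_abs_le (⟪Gr - A s w, w⟫ : ℝ); linarith
        have h4 : (⟪Gr, w⟫ : ℝ) = ⟪A s w, w⟫ + ⟪Gr - A s w, w⟫ := by
          rw [← inner_add_left]
          congr 1
          abel
        nlinarith
      have hfw : f s = ‖w‖ ^ 2 := real_inner_self_eq_norm_sq w
      have hlams : lam' s = lam1 s := hlam'eq s hsT
      have hin : (⟪w, -(ε⁻¹) • Gr⟫ : ℝ) + ⟪-(ε⁻¹) • Gr, w⟫ = -(2*ε⁻¹) * ⟪Gr, w⟫ := by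
        rw [real_inner_smul_left, real_inner_smul_right, real_inner_comm w Gr]
        ring
      have hexp0 : (0:ℝ) < Real.exp (E s) := Real.exp_pos _
      have h2ε : (0:ℝ) < 2/ε := by positivity
      have hmain : (⟪w, -(ε⁻¹) • Gr⟫ : ℝ) + ⟪-(ε⁻¹) • Gr, w⟫
          + f s * ((2/ε) * (lam' s - δ0)) ≤ 0 := by
        have hdiv : (2:ℝ)/ε = 2 * ε⁻¹ := by ring
        have hmul := mul_le_mul_of_nonneg_left hinner h2ε.le
        rw [hin, hfw, hlams, hdiv]
        rw [hdiv] at hmul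
        ring_nf at hmul ⊢
        linarith [hmul]
      exact mul_nonpos_of_nonpos_of_nonneg hmain hexp0.le
    -- bootstrap
    have hE0 : ∀ s ∈ Icc (0:ℝ) t, 0 ≤ E s := by
      intro s hs
      have := hδ0 s hs
      have h2ε : (0:ℝ) ≤ 2/ε := by positivity
      have : 0 ≤ g s - δ0 * s := by linarith
      exact mul_nonneg h2ε this
    have hψ0 : ψ 0 = f 0 := by
      simp [hψdef, hEdef, hg0]
    have hf0 : f 0 = ‖u ε 0‖ ^ 2 := real_inner_self_eq_norm_sq _
    have hfnonneg : ∀ s, 0 ≤ f s := fun s => real_inner_self_nonneg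
    have hψ_to_f : ∀ s ∈ Icc (0:ℝ) t, ψ s ≤ f 0 → f s ≤ f 0 := by
      intro s hs hψs
      have h1 : 1 ≤ Real.exp (E s) := by
        have := Real.add_one_le_exp (E s)
        linarith [hE0 s hs]
      have h2 : f s * 1 ≤ f s * Real.exp (E s) :=
        mul_le_mul_of_nonneg_left h1 (hfnonneg s)
      have h3 : ψ s = f s * Real.exp (E s) := rfl
      linarith [h2, hψs]
    have hnorm_of_f : ∀ s, f s ≤ f 0 → ‖u ε s‖ ≤ ‖u ε 0‖ := by
      intro s hfs
      have e1 : f s = ‖u ε s‖ ^ 2 := real_inner_self_eq_norm_sq _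
      have e2 : f 0 = ‖u ε 0‖ ^ 2 := real_inner_self_eq_norm_sq _
      rw [e1, e2] at hfs
      have h2 := Real.sqrt_le_sqrt hfs
      rwa [Real.sqrt_sq (norm_nonneg _), Real.sqrt_sq (norm_nonneg _)] at h2
    set C : Set ℝ := {s | s ∈ Icc (0:ℝ) t ∧ ∀ τ ∈ Icc (0:ℝ) s, ψ τ ≤ f 0} with hC
    have h0C : (0:ℝ) ∈ C := by
      refine ⟨⟨le_rfl, ht0⟩, fun τ hτ => ?_⟩
      have : τ = 0 := le_antisymm hτ.2 hτ.1
      rw [this, hψ0]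
    have hCbdd : BddAbove C := ⟨t, fun x hx => hx.1.2⟩
    set s₀ := sSup C with hs₀def
    have hs₀mem : s₀ ∈ Icc (0:ℝ) t :=
      ⟨le_csSup hCbdd h0C, csSup_le ⟨0, h0C⟩ (fun x hx => hx.1.2)⟩
    have hlt : ∀ τ : ℝ, 0 ≤ τ → τ < s₀ → ψ τ ≤ f 0 := by
      intro τ hτ0 hτs
      obtain ⟨x, hxC, hx⟩ := exists_lt_of_lt_csSup ⟨0, h0C⟩ hτs
      exact hxC.2 τ ⟨hτ0, hx.le⟩
    have hs₀C : s₀ ∈ C := by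
      refine ⟨hs₀mem, ?_⟩
      intro τ hτ
      rcases lt_or_eq_of_le hτ.2 with h | h
      · exact hlt τ hτ.1 h
      · rw [h]
        rcases eq_or_lt_of_le hs₀mem.1 with h0' | h0'
        · rw [← h0', hψ0]
        · have hcont : ContinuousWithinAt ψ (Iio s₀) s₀ :=
            (hψcont s₀ (hIccT hs₀mem)).continuousWithinAt
          have hev : ∀ᶠ x in 𝓝[<] s₀, ψ x ≤ f 0 := by
            filter_upwards [Ioo_mem_nhdsLT_of_mem (⟨h0', le_rfl⟩ : s₀ ∈ Ioc (0:ℝ) s₀)]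
              with x hx
            exact hlt x hx.1.le hx.2
          exact le_of_tendsto hcont hev
    have hs₀t : s₀ = t := by
      by_contra hne
      have hs₀lt : s₀ < t := lt_of_le_of_ne hs₀mem.2 hne
      have hfs₀ : f s₀ ≤ f 0 := hψ_to_f s₀ hs₀mem (hs₀C.2 s₀ ⟨hs₀mem.1, le_rfl⟩)
      have hns₀ : ‖u ε s₀‖ < r := lt_of_le_of_lt (hnorm_of_f s₀ hfs₀) hsmall
      have hcn : ContinuousAt (fun τ => ‖u ε τ‖) s₀ := (hucont s₀ (hIccT hs₀mem)).norm
      have hev : ∀ᶠ τ in 𝓝 s₀, ‖u ε τ‖ < r := hcn.eventually (eventually_lt_nhds hns₀)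
      obtain ⟨d, hd0, hdball⟩ := Metric.eventually_nhds_iff.mp hev
      set h := min (d/2) (t - s₀) with hh
      have hh0 : 0 < h := lt_min (by positivity) (by linarith)
      have hs₀h_le : s₀ + h ≤ t := by
        have := min_le_right (d/2) (t - s₀); simp only [hh]; linarith
      have hsmall_norm : ∀ τ ∈ Icc s₀ (s₀ + h), ‖u ε τ‖ < r := by
        intro τ hτ
        apply hdball
        rw [Real.dist_eq, abs_lt]
        have h1 := min_le_left (d/2) (t - s₀)
        constructor <;> [linarith [hτ.1]; linarith [hτ.2]]
      have hmono : AntitoneOn ψ (Icc s₀ (s₀ + h)) := by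
        apply antitoneOn_of_deriv_nonpos (convex_Icc _ _)
        · intro τ hτ
          have hτIcc : τ ∈ Icc (0:ℝ) t :=
            ⟨hs₀mem.1.trans hτ.1, hτ.2.trans hs₀h_le⟩
          exact (hψcont τ (hIccT hτIcc)).continuousWithinAt
        · intro τ hτ
          rw [interior_Icc] at hτ
          have hτIcc : τ ∈ Icc (0:ℝ) t :=
            ⟨hs₀mem.1.trans hτ.1.le, hτ.2.le.trans hs₀h_le⟩
          exact (hψderiv τ (hIccT hτIcc)).differentiableAt.differentiableWithinAt
        · intro τ hτ
          rw [interior_Icc] at hτ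
          have hτIcc : τ ∈ Icc (0:ℝ) t :=
            ⟨hs₀mem.1.trans hτ.1.le, hτ.2.le.trans hs₀h_le⟩
          rw [(hψderiv τ (hIccT hτIcc)).deriv]
          exact hd_nonpos τ hτIcc (hsmall_norm τ ⟨hτ.1.le, hτ.2.le⟩).le
      have hmem_h : s₀ + h ∈ C := by
        refine ⟨⟨by linarith [hs₀mem.1], hs₀h_le⟩, fun τ hτ => ?_⟩
        rcases le_or_gt τ s₀ with hc | hc
        · exact hs₀C.2 τ ⟨hτ.1, hc⟩
        · have h1 : ψ τ ≤ ψ s₀ :=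
            hmono (left_mem_Icc.mpr (by linarith)) ⟨hc.le, hτ.2⟩ hc.le
          exact h1.trans (hs₀C.2 s₀ ⟨hs₀mem.1, le_rfl⟩)
      have := le_csSup hCbdd hmem_h
      rw [← hs₀def] at this
      linarith
    intro s hs
    have hψs : ψ s ≤ f 0 := by
      rw [hs₀t] at hs₀C
      exact hs₀C.2 s hs
    exact hnorm_of_f s (hψ_to_f s hs hψs)
  -- conclusion
  rw [Metric.tendstoUniformlyOn_iff]
  intro η₂ hη₂
  have hρ : (0:ℝ) < min r (η₂/2) := lt_min hr0 (by positivity)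
  have hev1 : ∀ᶠ ε in 𝓝[>] (0:ℝ), dist (u ε 0) 0 < min r (η₂/2) :=
    (Metric.tendsto_nhds.mp hinit) _ hρ
  filter_upwards [hev1, self_mem_nhdsWithin] with ε h1 h2
  intro s hs
  have hε : (0:ℝ) < ε := h2
  rw [dist_zero_right] at h1
  have hsm : ‖u ε 0‖ < r := lt_of_lt_of_le h1 (min_le_left _ _)
  have hkey := key ε hε hsm s hs
  have h3 : ‖u ε 0‖ < η₂/2 := lt_of_lt_of_le h1 (min_le_right _ _)
  have : dist ((0 : ℝ → X) s) (u ε s) = ‖u ε s‖ := by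
    simp [dist_eq_norm]
  rw [this]
  linarith
end

section
/- Let X be a finite-dimensional Hilbert space, A : [0,T] → Sym(X) continuous with simple minimal eigenvalue λ₁(t) whose one-dimensional eigenspace span(e₁) is independent of t, with ‖e₁‖ = 1. Let λ^⊥(t) denote the minimal eigenvalue of A(t) restricted to e₁^⊥. If δ > 0 and η > 0 satisfy λ^⊥(s) − λ₁(s) > η((1+δ)^{3/2} + (1+δ))/δ for all s, and u : [0, t̂] → X is C¹ with ε u̇(s) = −A(s)u(s) − B(s,u(s)) where ‖B(s,u(s))‖ ≤ η‖u(s)‖, u(s) ≠ 0 for all s, and the initial condition satisfies (1+δ)⟨u(0), e₁⟩² > ‖u(0)‖², then (1+δ)⟨u(s), e₁⟩² > ‖u(s)‖² for all s ∈ [0, t̂]. -/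
open Set MeasureTheory Filter
open scoped RealInnerProductSpace Topology

set_option maxHeartbeats 1000000 in
/-- cone invariance (Claim 1 of Theorem 3.3): the open cone
`‖u‖² < (1+δ)⟨u,e₁⟩²` is invariant along the perturbed flow `ε u̇ = -A(s)u - B(s,u)`. -/
theorem stmt4
    {X : Type*} [NormedAddCommGroup X] [InnerProductSpace ℝ X] [FiniteDimensional ℝ X]
    (ε η δ that : ℝ) (hε : 0 < ε) (hη : 0 < η) (hδ : 0 < δ) (hthat : 0 ≤ that)
    (A : ℝ → X →L[ℝ] X) (hAcont : Continuous A)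
    (hAsym : ∀ s : ℝ, ∀ v w : X, ⟪A s v, w⟫ = ⟪v, A s w⟫)
    (e1 : X) (he1 : ‖e1‖ = 1)
    (lam1 lamperp : ℝ → ℝ)
    (heig : ∀ s : ℝ, A s e1 = lam1 s • e1)
    (hmin : ∀ s : ℝ, IsLeast {μ : ℝ | ∃ v : X, v ≠ 0 ∧ A s v = μ • v} (lam1 s))
    (hsimple : ∀ s : ℝ, ∀ v : X, A s v = lam1 s • v → ∃ c : ℝ, v = c • e1)
    (hlamperp : ∀ s : ℝ,
      IsLeast {r : ℝ | ∃ v : X, ⟪v, e1⟫ = 0 ∧ ‖v‖ = 1 ∧ r = ⟪A s v, v⟫} (lamperp s))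
    (hgap : ∀ s ∈ Icc 0 that,
      lamperp s - lam1 s > η * ((1 + δ) ^ ((3:ℝ)/2) + (1 + δ)) / δ)
    (u : ℝ → X) (B : ℝ → X)
    (hu : ∀ s ∈ Icc 0 that, HasDerivAt u (-(ε⁻¹) • (A s (u s) + B s)) s)
    (hB : ∀ s ∈ Icc 0 that, ‖B s‖ ≤ η * ‖u s‖)
    (hne : ∀ s ∈ Icc 0 that, u s ≠ 0)
    (hinit : ‖u 0‖ ^ 2 < (1 + δ) * ⟪u 0, e1⟫ ^ 2) :
    ∀ s ∈ Icc 0 that, ‖u s‖ ^ 2 < (1 + δ) * ⟪u s, e1⟫ ^ 2 := by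
  set g : ℝ → ℝ := fun s => (1 + δ) * ⟪u s, e1⟫ ^ 2 - ⟪u s, u s⟫ with hgdef
  have hnorm : ∀ s, ‖u s‖ ^ 2 = ⟪u s, u s⟫ := fun s => (real_inner_self_eq_norm_sq _).symm
  -- derivative of g at points of Icc
  have hd : ∀ s ∈ Icc 0 that, HasDerivAt g
      ((1 + δ) * (2 * ⟪u s, e1⟫ * ⟪-(ε⁻¹) • (A s (u s) + B s), e1⟫)
        - (⟪u s, -(ε⁻¹) • (A s (u s) + B s)⟫ + ⟪-(ε⁻¹) • (A s (u s) + B s), u s⟫)) s := by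
    intro s hs
    have h1 : HasDerivAt (fun t => ⟪u t, e1⟫) (⟪-(ε⁻¹) • (A s (u s) + B s), e1⟫) s := by
      have := (hu s hs).inner ℝ (hasDerivAt_const s e1)
      simpa using this
    have h1' : HasDerivAt (fun t => (1 + δ) * ⟪u t, e1⟫ ^ 2)
        ((1 + δ) * (2 * ⟪u s, e1⟫ * ⟪-(ε⁻¹) • (A s (u s) + B s), e1⟫)) s := by
      have : HasDerivAt (fun t => (1 + δ) * ⟪u t, e1⟫ ^ 2)
          ((1 + δ) * (((2:ℕ):ℝ) * ⟪u s, e1⟫ ^ (2 - 1) * ⟪-(ε⁻¹) • (A s (u s) + B s), e1⟫)) s :=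
        ((h1.fun_pow 2).const_mul (1 + δ))
      convert this using 1
      ring
    have h2 : HasDerivAt (fun t => ⟪u t, u t⟫)
        (⟪u s, -(ε⁻¹) • (A s (u s) + B s)⟫ + ⟪-(ε⁻¹) • (A s (u s) + B s), u s⟫) s :=
      (hu s hs).inner ℝ (hu s hs)
    exact h1'.sub h2
  -- reduce to positivity of g
  intro s hs
  by_contra hcon
  push_neg at hcon
  have hsS : g s ≤ 0 := by simp only [hgdef]; rw [← hnorm]; linarith
  set S : Set ℝ := {x | x ∈ Icc 0 that ∧ g x ≤ 0} with hSdef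
  have hSne : S.Nonempty := ⟨s, hs, hsS⟩
  have hSbdd : BddBelow S := ⟨0, fun x hx => hx.1.1⟩
  have hSclosed : IsClosed S := by
    refine isClosed_of_closure_subset fun x hx => ?_
    have hxIcc : x ∈ Icc 0 that :=
      isClosed_Icc.closure_subset (closure_mono (fun y hy => hy.1) hx)
    have hcx : ContinuousAt g x := (hd x hxIcc).continuousAt
    haveI hneb : (𝓝[S] x).NeBot := mem_closure_iff_nhdsWithin_neBot.1 hx
    have ht : Tendsto g (𝓝[S] x) (𝓝 (g x)) :=
      (hcx.continuousWithinAt (s := S)).tendsto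
    refine ⟨hxIcc, le_of_tendsto ht ?_⟩
    exact eventually_nhdsWithin_of_forall fun y hy => hy.2
  set s₀ := sInf S with hs₀def
  have hs₀S : s₀ ∈ S := hSclosed.csInf_mem hSne hSbdd
  have hs₀Icc : s₀ ∈ Icc 0 that := hs₀S.1
  have hg0 : 0 < g 0 := by simp only [hgdef]; rw [← hnorm]; linarith
  have hs₀pos : 0 < s₀ := by
    rcases hs₀Icc.1.lt_or_eq with h | h
    · exact h
    · exfalso; have h2 := hs₀S.2; rw [← h] at h2; linarith
  have hposlt : ∀ y, 0 ≤ y → y < s₀ → 0 < g y := by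
    intro y hy0 hys
    by_contra hy
    push_neg at hy
    have : y ∈ S := ⟨⟨hy0, hys.le.trans hs₀Icc.2⟩, hy⟩
    exact absurd (csInf_le hSbdd this) (not_le.2 hys)
  -- g s₀ = 0
  have hgs₀ : g s₀ = 0 := by
    refine le_antisymm hs₀S.2 ?_
    have hcl : s₀ ∈ closure (Ico 0 s₀) := by
      rw [closure_Ico hs₀pos.ne]; exact ⟨hs₀pos.le, le_rfl⟩
    haveI hneb : (𝓝[Ico 0 s₀] s₀).NeBot := mem_closure_iff_nhdsWithin_neBot.1 hcl
    have ht : Tendsto g (𝓝[Ico 0 s₀] s₀) (𝓝 (g s₀)) :=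
      (((hd s₀ hs₀Icc).continuousAt).continuousWithinAt (s := Ico 0 s₀)).tendsto
    exact ge_of_tendsto ht (eventually_nhdsWithin_of_forall
      fun y hy => (hposlt y hy.1 hy.2).le)
  -- derivative at s₀ is ≤ 0
  set u' : X := -(ε⁻¹) • (A s₀ (u s₀) + B s₀) with hu'def
  set D : ℝ := (1 + δ) * (2 * ⟪u s₀, e1⟫ * ⟪u', e1⟫) - (⟪u s₀, u'⟫ + ⟪u', u s₀⟫) with hDdef
  have hDle : D ≤ 0 := by
    have hslope : Tendsto (slope g s₀) (𝓝[≠] s₀) (𝓝 D) :=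
      hasDerivAt_iff_tendsto_slope.1 (hd s₀ hs₀Icc)
    have hmono : 𝓝[Ico 0 s₀] s₀ ≤ 𝓝[≠] s₀ :=
      nhdsWithin_mono s₀ (fun y hy => ne_of_lt hy.2)
    have hcl : s₀ ∈ closure (Ico 0 s₀) := by
      rw [closure_Ico hs₀pos.ne]; exact ⟨hs₀pos.le, le_rfl⟩
    haveI hneb : (𝓝[Ico 0 s₀] s₀).NeBot := mem_closure_iff_nhdsWithin_neBot.1 hcl
    refine le_of_tendsto (hslope.mono_left hmono)
      (eventually_nhdsWithin_of_forall fun y hy => ?_)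
    have h1 : 0 < g y := hposlt y hy.1 hy.2
    have h2 : y - s₀ < 0 := by linarith [hy.2]
    rw [slope_def_field, div_nonpos_iff]
    left
    exact ⟨by rw [hgs₀]; linarith, by linarith⟩
  -- now show D > 0, contradiction
  set c : ℝ := ⟪u s₀, e1⟫ with hcdef
  set b : X := B s₀ with hbdef
  have hee : ⟪e1, e1⟫ = (1:ℝ) := by
    rw [real_inner_self_eq_norm_sq, he1]; norm_num
  have hnn : ⟪u s₀, u s₀⟫ = (1 + δ) * c ^ 2 := by
    have h := hgs₀
    simp only [hgdef] at h
    linarith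
  have hc0 : c ≠ 0 := by
    intro h
    have h2 : ⟪u s₀, u s₀⟫ = (0:ℝ) := by rw [hnn, h]; ring
    exact hne s₀ hs₀Icc (inner_self_eq_zero.1 h2)
  have hc2 : 0 < c ^ 2 := pow_two_pos_of_ne_zero hc0
  set w : X := u s₀ - c • e1 with hwdef
  have hu0 : u s₀ = c • e1 + w := by rw [hwdef]; abel
  have hwperp : ⟪w, e1⟫ = (0:ℝ) := by
    rw [hwdef, inner_sub_left, real_inner_smul_left, hee, ← hcdef]
    ring
  have hwn : ⟪w, w⟫ = δ * c ^ 2 := by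
    rw [hwdef]
    simp only [inner_sub_left, inner_sub_right, real_inner_smul_left,
      real_inner_smul_right, hee, hnn]
    rw [real_inner_comm e1 (u s₀)]
    have hcomm : ⟪e1, u s₀⟫ = c := by rw [real_inner_comm]
    rw [hcomm]
    ring
  have hAw : lamperp s₀ * ⟪w, w⟫ ≤ ⟪A s₀ w, w⟫ := by
    rcases eq_or_ne w 0 with h | h
    · simp [h]
    · have hwnorm : ‖w‖ ≠ 0 := norm_ne_zero_iff.2 h
      have hwpos : 0 < ‖w‖ := norm_pos_iff.2 h
      set v : X := ‖w‖⁻¹ • w with hvdef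
      have hv1 : ‖v‖ = 1 := by
        rw [hvdef, norm_smul, norm_inv, norm_norm, inv_mul_cancel₀ hwnorm]
      have hvperp : ⟪v, e1⟫ = (0:ℝ) := by
        rw [hvdef, real_inner_smul_left, hwperp]; ring
      have hle := (hlamperp s₀).2 ⟨v, hvperp, hv1, rfl⟩
      have hvv : ⟪A s₀ v, v⟫ = ‖w‖⁻¹ * (‖w‖⁻¹ * ⟪A s₀ w, w⟫) := by
        rw [hvdef, _root_.map_smul, real_inner_smul_left, real_inner_smul_right]
      have hww : ⟪w, w⟫ = ‖w‖ ^ 2 := real_inner_self_eq_norm_sq w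
      rw [hww]
      rw [hvv] at hle
      have h2 : 0 < ‖w‖ ^ 2 := by positivity
      have := mul_le_mul_of_nonneg_left hle h2.le
      calc lamperp s₀ * ‖w‖ ^ 2 = ‖w‖ ^ 2 * lamperp s₀ := by ring
        _ ≤ ‖w‖ ^ 2 * (‖w‖⁻¹ * (‖w‖⁻¹ * ⟪A s₀ w, w⟫)) := this
        _ = ⟪A s₀ w, w⟫ := by field_simp
  have hAwe : ⟪A s₀ w, e1⟫ = (0:ℝ) := by
    rw [hAsym, heig, real_inner_smul_right, hwperp]; ring
  have hAu : A s₀ (u s₀) = (c * lam1 s₀) • e1 + A s₀ w := by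
    conv_lhs => rw [hu0]
    rw [map_add, _root_.map_smul, heig, smul_smul]
  have hQ : ⟪A s₀ (u s₀), u s₀⟫ = lam1 s₀ * c ^ 2 + ⟪A s₀ w, w⟫ := by
    conv_lhs => rw [hAu, hu0]
    simp only [inner_add_left, inner_add_right, real_inner_smul_left,
      real_inner_smul_right, hee, hAwe, real_inner_comm e1 w, hwperp]
    have hew : ⟪e1, w⟫ = (0:ℝ) := by rw [real_inner_comm]; exact hwperp
    rw [hew]
    ring
  -- norm of u s₀ and bounds involving B
  have hns : ‖u s₀‖ ^ 2 = (1 + δ) * c ^ 2 := by rw [hnorm]; exact hnn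
  have hnorms : ‖u s₀‖ = Real.sqrt (1 + δ) * |c| := by
    have h1 : ‖u s₀‖ = Real.sqrt ((1 + δ) * c ^ 2) := by
      rw [← hns, Real.sqrt_sq (norm_nonneg _)]
    rw [h1, Real.sqrt_mul (by linarith), Real.sqrt_sq_eq_abs]
  have hBb : ‖b‖ ≤ η * (Real.sqrt (1 + δ) * |c|) := by
    rw [← hnorms]; exact hB s₀ hs₀Icc
  have hbu : |⟪b, u s₀⟫| ≤ η * ((1 + δ) * c ^ 2) := by
    have h1 := abs_real_inner_le_norm b (u s₀)
    have h2 := hB s₀ hs₀Icc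
    nlinarith [norm_nonneg (u s₀), norm_nonneg b]
  have hbe : |⟪b, e1⟫| ≤ η * (Real.sqrt (1 + δ) * |c|) := by
    have h1 := abs_real_inner_le_norm b e1
    rw [he1, mul_one] at h1
    exact h1.trans hBb
  have hsq : Real.sqrt (1 + δ) ^ 2 = 1 + δ := Real.sq_sqrt (by linarith)
  have hrpow : (1 + δ) ^ ((3:ℝ)/2) = (1 + δ) * Real.sqrt (1 + δ) := by
    rw [show (3:ℝ)/2 = 1 + 1/2 by norm_num, Real.rpow_add (by linarith),
      Real.rpow_one, ← Real.sqrt_eq_rpow]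
  have hgap0 := hgap s₀ hs₀Icc
  rw [hrpow] at hgap0
  have hgm : η * ((1 + δ) * Real.sqrt (1 + δ) + (1 + δ)) * c ^ 2
      < (lamperp s₀ - lam1 s₀) * (δ * c ^ 2) := by
    rw [gt_iff_lt, div_lt_iff₀ hδ] at hgap0
    have h := mul_lt_mul_of_pos_right hgap0 hc2
    nlinarith [h]
  have h3 : (1 + δ) * c * ⟪b, e1⟫ ≤ η * ((1 + δ) * Real.sqrt (1 + δ)) * c ^ 2 := by
    have habs : (1 + δ) * c * ⟪b, e1⟫ ≤ (1 + δ) * |c| * |⟪b, e1⟫| := by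
      calc (1 + δ) * c * ⟪b, e1⟫ ≤ |(1 + δ) * c * ⟪b, e1⟫| := le_abs_self _
        _ = (1 + δ) * |c| * |⟪b, e1⟫| := by
            rw [abs_mul, abs_mul, abs_of_pos (by linarith : (0:ℝ) < 1 + δ)]
    have h4 := mul_le_mul_of_nonneg_left hbe
      (by positivity : (0:ℝ) ≤ (1 + δ) * |c|)
    have h5 : |c| * |c| = c ^ 2 := by rw [← abs_mul, abs_mul_self]; ring
    have h6 : (1 + δ) * |c| * (η * (Real.sqrt (1 + δ) * |c|))
        = η * ((1 + δ) * Real.sqrt (1 + δ)) * c ^ 2 := by rw [← h5]; ring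
    linarith [habs, h4, h6]
  have h2 : -(η * ((1 + δ) * c ^ 2)) ≤ ⟪b, u s₀⟫ := neg_le_of_abs_le hbu
  have hKey : 0 < ⟪A s₀ (u s₀), u s₀⟫ + ⟪b, u s₀⟫
      - (1 + δ) * (lam1 s₀ * c ^ 2) - (1 + δ) * c * ⟪b, e1⟫ := by
    have h1 : lamperp s₀ * (δ * c ^ 2) ≤ ⟪A s₀ w, w⟫ := by rw [← hwn]; exact hAw
    nlinarith [hQ]
  have hD : 0 < D := by
    have hAue : ⟪A s₀ (u s₀), e1⟫ = lam1 s₀ * c := by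
      rw [hAsym, heig, real_inner_smul_right]
    have hu'e : ⟪u', e1⟫ = -(ε⁻¹) * (lam1 s₀ * c + ⟪b, e1⟫) := by
      rw [hu'def, real_inner_smul_left, inner_add_left, hAue]
    have hu'u : ⟪u', u s₀⟫ = -(ε⁻¹) * (⟪A s₀ (u s₀), u s₀⟫ + ⟪b, u s₀⟫) := by
      rw [hu'def, real_inner_smul_left, inner_add_left]
    have huu' : ⟪u s₀, u'⟫ = ⟪u', u s₀⟫ := real_inner_comm _ _
    rw [hDdef, hu'e, huu', hu'u]
    have heq : (1 + δ) * (2 * c * (-(ε⁻¹) * (lam1 s₀ * c + ⟪b, e1⟫)))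
        - (-(ε⁻¹) * (⟪A s₀ (u s₀), u s₀⟫ + ⟪b, u s₀⟫)
          + -(ε⁻¹) * (⟪A s₀ (u s₀), u s₀⟫ + ⟪b, u s₀⟫))
        = 2 * ε⁻¹ * (⟪A s₀ (u s₀), u s₀⟫ + ⟪b, u s₀⟫
          - (1 + δ) * (lam1 s₀ * c ^ 2) - (1 + δ) * c * ⟪b, e1⟫) := by ring
    rw [heq]
    have hεinv : 0 < ε⁻¹ := inv_pos.2 hε
    positivity
  exact absurd hD (not_lt.2 hDle)
end

section
/- Under the setting of the cone-invariance property (simple minimal eigenvalue λ₁(s) with fixed unit eigenvector e₁, nonlinear term bounded by ‖B(s,u)‖ ≤ η‖u‖, and ‖u(s)‖² ≤ (1+δ)⟨u(s), e₁⟩² along the flow ε u̇ = −A(s)u − B(s,u)), the component u¹(s) := ⟨u(s), e₁⟩ satisfies the lower Gronwall bound |u¹(t̂)|² ≥ |u¹(0)|² · exp(−(2/ε) ∫₀^{t̂} (λ₁(s) + η√(1+δ)) ds). -/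
open Set MeasureTheory Filter
open scoped RealInnerProductSpace Topology

/-- lower Gronwall bound for the component `u¹(s) = ⟨u(s),e₁⟩` along
the perturbed flow, inside the cone `‖u‖² ≤ (1+δ)⟨u,e₁⟩²`. -/
theorem stmt5
    {X : Type*} [NormedAddCommGroup X] [InnerProductSpace ℝ X] [FiniteDimensional ℝ X]
    (ε η δ that : ℝ) (hε : 0 < ε) (hη : 0 < η) (hδ : 0 < δ) (hthat : 0 ≤ that)
    (A : ℝ → X →L[ℝ] X) (hAcont : Continuous A)
    (hAsym : ∀ s : ℝ, ∀ v w : X, ⟪A s v, w⟫ = ⟪v, A s w⟫)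
    (e1 : X) (he1 : ‖e1‖ = 1)
    (lam1 : ℝ → ℝ)
    (heig : ∀ s : ℝ, A s e1 = lam1 s • e1)
    (hmin : ∀ s : ℝ, IsLeast {μ : ℝ | ∃ v : X, v ≠ 0 ∧ A s v = μ • v} (lam1 s))
    (u : ℝ → X) (B : ℝ → X)
    (hu : ∀ s ∈ Icc 0 that, HasDerivAt u (-(ε⁻¹) • (A s (u s) + B s)) s)
    (hB : ∀ s ∈ Icc 0 that, ‖B s‖ ≤ η * ‖u s‖)
    (hcone : ∀ s ∈ Icc 0 that, ‖u s‖ ^ 2 ≤ (1 + δ) * ⟪u s, e1⟫ ^ 2) :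
    ⟪u that, e1⟫ ^ 2 ≥ ⟪u 0, e1⟫ ^ 2 *
      Real.exp (-(2 / ε) * ∫ s in (0:ℝ)..that, (lam1 s + η * Real.sqrt (1 + δ))) := by
  set c : ℝ := 2 / ε with hc
  have hcpos : 0 < c := by positivity
  set σ : ℝ := Real.sqrt (1 + δ) with hσ
  set φ : ℝ → ℝ := fun s => lam1 s + η * σ with hφ
  set g : ℝ → ℝ := fun s => ⟪u s, e1⟫ with hgdef
  set v : ℝ → ℝ := fun s => -(ε⁻¹) * (lam1 s * g s + ⟪B s, e1⟫) with hvdef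
  -- lam1 is continuous
  have hlamc : Continuous lam1 := by
    have h1 : Continuous fun s => ⟪A s e1, e1⟫ :=
      Continuous.inner ((ContinuousLinearMap.apply ℝ X e1).continuous.comp hAcont)
        continuous_const
    have h2 : (fun s => ⟪A s e1, e1⟫) = lam1 := by
      funext s
      rw [heig, real_inner_smul_left, real_inner_self_eq_norm_sq, he1]
      ring
    rwa [h2] at h1
  have hφc : Continuous φ := by
    exact hlamc.add continuous_const
  set F : ℝ → ℝ := fun r => ∫ t in (0:ℝ)..r, c * φ t with hFdef
  have hF : ∀ s : ℝ, HasDerivAt F (c * φ s) s := by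
    intro s
    exact intervalIntegral.integral_hasDerivAt_right
      ((continuous_const.mul hφc).intervalIntegrable _ _)
      ((continuous_const.mul hφc).stronglyMeasurableAtFilter _ _)
      (continuous_const.mul hφc).continuousAt
  have hg' : ∀ s ∈ Icc 0 that, HasDerivAt g (v s) s := by
    intro s hs
    have h0 := HasDerivAt.inner ℝ (hu s hs) (hasDerivAt_const s e1)
    have heq : ⟪u s, (0 : X)⟫ + ⟪-(ε⁻¹) • (A s (u s) + B s), e1⟫ = v s := by
      have hA1 : ⟪A s (u s), e1⟫ = lam1 s * g s := by
        rw [hAsym, heig, real_inner_smul_right]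
      simp only [inner_zero_right, real_inner_smul_left, inner_add_left, hA1, hvdef]
      ring
    rw [heq] at h0
    exact h0
  set h : ℝ → ℝ := fun s => g s ^ 2 * Real.exp (F s) with hhdef
  have hh : ∀ s ∈ Icc 0 that,
      HasDerivAt h ((2 * g s * v s + g s ^ 2 * (c * φ s)) * Real.exp (F s)) s := by
    intro s hs
    have h1 : HasDerivAt (fun t => g t ^ 2) ((2 : ℕ) * g s ^ (2 - 1) * v s) s :=
      (hg' s hs).pow 2
    have h2 : HasDerivAt (fun t => Real.exp (F t)) (Real.exp (F s) * (c * φ s)) s :=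
      (hF s).exp
    have h3 := h1.mul h2
    refine h3.congr_deriv ?_
    push_cast
    ring
  -- pointwise nonnegativity of the derivative
  have hD : ∀ s ∈ Icc 0 that,
      0 ≤ (2 * g s * v s + g s ^ 2 * (c * φ s)) * Real.exp (F s) := by
    intro s hs
    have hb : ⟪B s, e1⟫ * g s ≤ η * σ * g s ^ 2 := by
      have h1 : ‖u s‖ ≤ σ * |g s| := by
        have h2 : ‖u s‖ ≤ Real.sqrt ((1 + δ) * g s ^ 2) := by
          rw [← Real.sqrt_sq (norm_nonneg (u s))]
          exact Real.sqrt_le_sqrt (hcone s hs)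
        rwa [Real.sqrt_mul (by linarith), Real.sqrt_sq_eq_abs] at h2
      have h3 : |⟪B s, e1⟫| ≤ ‖B s‖ := by
        calc |⟪B s, e1⟫| ≤ ‖B s‖ * ‖e1‖ := abs_real_inner_le_norm _ _
          _ = ‖B s‖ := by rw [he1, mul_one]
      have h4 : ⟪B s, e1⟫ * g s ≤ |⟪B s, e1⟫| * |g s| := by
        calc ⟪B s, e1⟫ * g s ≤ |⟪B s, e1⟫ * g s| := le_abs_self _
          _ = |⟪B s, e1⟫| * |g s| := abs_mul _ _
      have h5 : |⟪B s, e1⟫| * |g s| ≤ (η * ‖u s‖) * |g s| :=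
        mul_le_mul_of_nonneg_right (h3.trans (hB s hs)) (abs_nonneg _)
      have h6 : (η * ‖u s‖) * |g s| ≤ (η * (σ * |g s|)) * |g s| :=
        mul_le_mul_of_nonneg_right
          (mul_le_mul_of_nonneg_left h1 hη.le) (abs_nonneg _)
      have h7 : (η * (σ * |g s|)) * |g s| = η * σ * g s ^ 2 := by
        rw [show (η * (σ * |g s|)) * |g s| = η * σ * (|g s| * |g s|) by ring,
          ← abs_mul, abs_mul_self, ← sq]
      linarith
    have hkey : 2 * g s * v s + g s ^ 2 * (c * φ s)
        = c * (η * σ * g s ^ 2 - ⟪B s, e1⟫ * g s) := by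
      simp only [hvdef, hφ, hc]
      field_simp
      ring
    rw [hkey]
    exact mul_nonneg (mul_nonneg hcpos.le (by linarith)) (Real.exp_pos _).le
  have hmono : MonotoneOn h (Icc 0 that) := by
    apply monotoneOn_of_deriv_nonneg (convex_Icc 0 that)
    · exact fun x hx => ((hh x hx).continuousAt).continuousWithinAt
    · intro x hx
      exact ((hh x (interior_subset hx)).differentiableAt).differentiableWithinAt
    · intro x hx
      rw [(hh x (interior_subset hx)).deriv]
      exact hD x (interior_subset hx)
  have hle : h 0 ≤ h that := hmono ⟨le_refl 0, hthat⟩ ⟨hthat, le_refl that⟩ hthat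
  have hF0 : F 0 = 0 := intervalIntegral.integral_same
  have hh0 : h 0 = g 0 ^ 2 := by
    rw [hhdef]
    simp [hF0]
  have hFt : F that = c * ∫ s in (0:ℝ)..that, φ s :=
    intervalIntegral.integral_const_mul c φ
  have hle2 : g 0 ^ 2 ≤ g that ^ 2 * Real.exp (c * ∫ s in (0:ℝ)..that, φ s) := by
    rw [← hFt, ← hh0]
    exact hle
  have hexp : Real.exp (-(2 / ε) * ∫ s in (0:ℝ)..that, (lam1 s + η * Real.sqrt (1 + δ)))
      = (Real.exp (c * ∫ s in (0:ℝ)..that, φ s))⁻¹ := by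
    rw [← Real.exp_neg]
    congr 1
    rw [hc]
    ring_nf
    rfl
  rw [ge_iff_le, hexp, ← div_eq_mul_inv, div_le_iff₀ (Real.exp_pos _)]
  exact hle2
end
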